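/- arXiv:1508.03616 — 3 statements merged into one kernel-verified Lean document; each statement's English description precedes it below -/
import Mathlib

section
/- Let K₁, K₂ : ℝ^{d+1} \ {0} → ℝ be compactly supported kernels of orders ζ₁, ζ₂ with ζ₁ ∧ ζ₂ > -d_𝔰 and ζ := ζ₁ + ζ₂ + d_𝔰 < 0, where d_𝔰 = d + 2 is the parabolic dimension. Then the convolution K₁ ∗ K₂ is well-defined away from the origin and is a kernel of order ζ, with ‖K₁ ∗ K₂‖_ζ ≲ ‖K₁‖_{ζ₁} ‖K₂‖_{ζ₂}. -/
/-!
Split the convolution integral according to which of `y`, `z - y` is closer to the origin.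
Where `pnorm y ≤ pnorm (z - y)`, the triangle inequality gives
`pnorm (z - y) ≥ max (pnorm y) (pnorm z / 2)`, so `|K₁ y * K₂ (z - y)|` is at most
`C₁ C₂ pnorm y ^ ζ₁ max (pnorm y) (pnorm z / 2) ^ ζ₂`; the other region is the mirror image
under `y ↦ z - y`. Cutting space into dyadic shells `s ≤ pnorm y ≤ 2 s`, of volume
`O(s ^ (d + 2))`, the integral of this profile over `pnorm y ≤ ρ` is a geometric series that
converges because `ζ₁ > -(d + 2)`, and over `pnorm y ≥ ρ` one that converges because
`ζ₁ + ζ₂ < -(d + 2)`; both are `O(ρ ^ (ζ₁ + ζ₂ + d + 2))`.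
-/

open MeasureTheory

/-- The parabolic norm `‖(t,x)‖_𝔰 = |t|^{1/2} + Σ_j |x_j|` on `ℝ × ℝ^d`. -/
noncomputable def pnorm {d : ℕ} (z : ℝ × (Fin d → ℝ)) : ℝ :=
  Real.sqrt |z.1| + ∑ i, |z.2 i|

section
variable {d : ℕ}

-- `volume` on a product is not syntactically `Measure.prod`, so instances must be transferred.
instance : (volume : Measure (ℝ × (Fin d → ℝ))).IsAddHaarMeasure := by
  rw [Measure.volume_eq_prod]; infer_instance

lemma pnorm_nonneg (z : ℝ × (Fin d → ℝ)) : 0 ≤ pnorm z := by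
  unfold pnorm; positivity

lemma sqrt_abs_fst_le_pnorm (z : ℝ × (Fin d → ℝ)) : √|z.1| ≤ pnorm z :=
  le_add_of_nonneg_right (Finset.sum_nonneg fun _ _ => abs_nonneg _)

lemma abs_snd_apply_le_pnorm (z : ℝ × (Fin d → ℝ)) (i : Fin d) : |z.2 i| ≤ pnorm z :=
  (Finset.single_le_sum (fun j _ => abs_nonneg (z.2 j)) (Finset.mem_univ i)).trans
    (le_add_of_nonneg_left (Real.sqrt_nonneg _))

lemma pnorm_pos {z : ℝ × (Fin d → ℝ)} (hz : z ≠ 0) : 0 < pnorm z := by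
  refine (pnorm_nonneg z).lt_of_ne' fun h => hz ?_
  have hsum : ∀ i ∈ Finset.univ, 0 ≤ |z.2 i| := fun _ _ => abs_nonneg _
  obtain ⟨h₁, h₂⟩ := (add_eq_zero_iff_of_nonneg (Real.sqrt_nonneg _)
    (Finset.sum_nonneg hsum)).mp h
  rw [Real.sqrt_eq_zero (abs_nonneg _), abs_eq_zero] at h₁
  rw [Finset.sum_eq_zero_iff_of_nonneg hsum] at h₂
  exact Prod.ext h₁ (funext fun i => abs_eq_zero.mp (h₂ i (Finset.mem_univ i)))

lemma sqrt_add_le_sqrt_add_sqrt {x y : ℝ} (hx : 0 ≤ x) (hy : 0 ≤ y) :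
    √(x + y) ≤ √x + √y := by
  rw [Real.sqrt_le_left (by positivity)]
  nlinarith [Real.sq_sqrt hx, Real.sq_sqrt hy, Real.sqrt_nonneg x, Real.sqrt_nonneg y]

lemma pnorm_add_le (x y : ℝ × (Fin d → ℝ)) : pnorm (x + y) ≤ pnorm x + pnorm y := by
  have h₁ : √|x.1 + y.1| ≤ √|x.1| + √|y.1| :=
    (Real.sqrt_le_sqrt (abs_add_le _ _)).trans
      (sqrt_add_le_sqrt_add_sqrt (abs_nonneg _) (abs_nonneg _))
  have h₂ : ∑ i, |x.2 i + y.2 i| ≤ ∑ i, |x.2 i| + ∑ i, |y.2 i| := by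
    rw [← Finset.sum_add_distrib]
    exact Finset.sum_le_sum fun i _ => abs_add_le _ _
  simp only [pnorm, Prod.fst_add, Prod.snd_add, Pi.add_apply]
  linarith

lemma pnorm_le_add_pnorm_sub (z y : ℝ × (Fin d → ℝ)) : pnorm z ≤ pnorm y + pnorm (z - y) := by
  simpa using pnorm_add_le y (z - y)

@[fun_prop]
lemma continuous_pnorm : Continuous (pnorm (d := d)) := by
  unfold pnorm; fun_prop

@[fun_prop]
lemma measurable_pnorm : Measurable (pnorm (d := d)) := continuous_pnorm.measurable

lemma volume_pnorm_closedBall_le {r : ℝ} (hr : 0 ≤ r) :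
    volume {y : ℝ × (Fin d → ℝ) | pnorm y ≤ r} ≤
      ENNReal.ofReal (2 ^ (d + 1) * r ^ ((d : ℝ) + 2)) := by
  have hbox : {y : ℝ × (Fin d → ℝ) | pnorm y ≤ r} ⊆
      Set.Icc (-r ^ 2) (r ^ 2) ×ˢ Set.univ.pi fun _ => Set.Icc (-r) r := by
    intro y hy
    refine ⟨abs_le.mp ?_, fun i _ => abs_le.mp ?_⟩
    · exact (Real.sqrt_le_left hr).mp ((sqrt_abs_fst_le_pnorm y).trans hy)
    · exact (abs_snd_apply_le_pnorm y i).trans hy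
  refine (measure_mono hbox).trans (le_of_eq ?_)
  rw [Measure.volume_eq_prod, Measure.prod_prod, Real.volume_Icc, volume_pi_pi]
  simp only [Real.volume_Icc, Finset.prod_const, Finset.card_univ, Fintype.card_fin,
    sub_neg_eq_add, ← two_mul]
  rw [← ENNReal.ofReal_pow (by positivity), ← ENNReal.ofReal_mul (by positivity),
    show (d : ℝ) + 2 = ((d + 2 : ℕ) : ℝ) by push_cast; ring, Real.rpow_natCast]
  ring_nf

lemma lintegral_rpow_pnorm_shell_le {a s : ℝ} (ha : a ≤ 0) (hs : 0 < s) :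
    ∫⁻ y in {y : ℝ × (Fin d → ℝ) | s ≤ pnorm y ∧ pnorm y ≤ 2 * s},
        ENNReal.ofReal (pnorm y ^ a) ≤
      ENNReal.ofReal (2 ^ (d + 1) * 2 ^ ((d : ℝ) + 2) * s ^ (a + ((d : ℝ) + 2))) := by
  calc _ ≤ ∫⁻ _ in {y : ℝ × (Fin d → ℝ) | s ≤ pnorm y ∧ pnorm y ≤ 2 * s}, ENNReal.ofReal (s ^ a) :=
        setLIntegral_mono measurable_const fun y hy =>
          ENNReal.ofReal_le_ofReal (Real.rpow_le_rpow_of_nonpos hs hy.1 ha)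
    _ ≤ ENNReal.ofReal (s ^ a) * ENNReal.ofReal (2 ^ (d + 1) * (2 * s) ^ ((d : ℝ) + 2)) := by
        rw [setLIntegral_const]
        gcongr
        exact (measure_mono fun y hy => hy.2).trans (volume_pnorm_closedBall_le (by positivity))
    _ = ENNReal.ofReal (2 ^ (d + 1) * 2 ^ ((d : ℝ) + 2) * s ^ (a + ((d : ℝ) + 2))) := by
        rw [← ENNReal.ofReal_mul (by positivity), Real.mul_rpow zero_le_two hs.le,
          Real.rpow_add hs a]
        congr 1
        ring

lemma lintegral_rpow_pnorm_iUnion_shell_le {a q r : ℝ} (ha : a ≤ 0) (hq : 0 < q) (hr : 0 < r)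
    (hqa : q ^ (a + ((d : ℝ) + 2)) < 1) :
    ∫⁻ y in ⋃ k : ℕ, {y : ℝ × (Fin d → ℝ) | r * q ^ k ≤ pnorm y ∧ pnorm y ≤ 2 * (r * q ^ k)},
        ENNReal.ofReal (pnorm y ^ a) ≤
      ENNReal.ofReal (2 ^ (d + 1) * 2 ^ ((d : ℝ) + 2) * (1 - q ^ (a + ((d : ℝ) + 2)))⁻¹ *
        r ^ (a + ((d : ℝ) + 2))) := by
  set e := a + ((d : ℝ) + 2)
  have hscale : ∀ k : ℕ, (r * q ^ k) ^ e = r ^ e * (q ^ e) ^ k := fun k => by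
    rw [Real.mul_rpow hr.le (by positivity), ← Real.rpow_natCast, ← Real.rpow_natCast,
      ← Real.rpow_mul hq.le, ← Real.rpow_mul (by positivity), mul_comm (k : ℝ) e, mul_comm]
  have hterm : ∀ k : ℕ, 0 ≤ 2 ^ (d + 1) * 2 ^ ((d : ℝ) + 2) * r ^ e * (q ^ e) ^ k :=
    fun k => by positivity
  calc _ ≤ ∑' k : ℕ, ∫⁻ y in {y : ℝ × (Fin d → ℝ) | r * q ^ k ≤ pnorm y ∧
          pnorm y ≤ 2 * (r * q ^ k)}, ENNReal.ofReal (pnorm y ^ a) := lintegral_iUnion_le _ _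
    _ ≤ ∑' k : ℕ, ENNReal.ofReal (2 ^ (d + 1) * 2 ^ ((d : ℝ) + 2) * r ^ e * (q ^ e) ^ k) := by
        refine ENNReal.tsum_le_tsum fun k =>
          (lintegral_rpow_pnorm_shell_le ha (by positivity)).trans ?_
        rw [hscale, mul_assoc _ (r ^ e)]
    _ = ENNReal.ofReal (2 ^ (d + 1) * 2 ^ ((d : ℝ) + 2) * r ^ e * (1 - q ^ e)⁻¹) := by
        rw [← ENNReal.ofReal_tsum_of_nonneg hterm
          ((summable_geometric_of_lt_one (by positivity) hqa).mul_left _), tsum_mul_left,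
          tsum_geometric_of_lt_one (by positivity) hqa]
    _ = _ := by ring_nf

lemma lintegral_rpow_pnorm_closedBall_le {a : ℝ} (ha₀ : -((d : ℝ) + 2) < a) (ha : a ≤ 0) :
    ∃ A : ℝ, 0 < A ∧ ∀ r : ℝ, 0 < r →
      ∫⁻ y in {y : ℝ × (Fin d → ℝ) | pnorm y ≤ r}, ENNReal.ofReal (pnorm y ^ a) ≤
        ENNReal.ofReal (A * r ^ (a + ((d : ℝ) + 2))) := by
  set e := a + ((d : ℝ) + 2)
  have hq : (1 / 2 : ℝ) ^ e < 1 := Real.rpow_lt_one (by norm_num) (by norm_num) (by linarith)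
  refine ⟨2 ^ (d + 1) * 2 ^ ((d : ℝ) + 2) * (1 - (1 / 2 : ℝ) ^ e)⁻¹ / 2 ^ e,
    by have := sub_pos.mpr hq; positivity, fun r hr => ?_⟩
  have hcover : {y : ℝ × (Fin d → ℝ) | pnorm y ≤ r} ≤ᵐ[volume] ⋃ k : ℕ,
      {y | r / 2 * (1 / 2) ^ k ≤ pnorm y ∧ pnorm y ≤ 2 * (r / 2 * (1 / 2) ^ k)} := by
    filter_upwards [Measure.ae_ne volume 0] with y hy0 hyr
    have hp := pnorm_pos hy0
    obtain ⟨n, hn₁, hn₂⟩ := exists_nat_pow_near ((one_le_div hp).mpr hyr) one_lt_two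
    rw [le_div_iff₀ hp] at hn₁
    rw [div_lt_iff₀ hp, pow_succ] at hn₂
    refine Set.mem_iUnion.mpr ⟨n, ?_, ?_⟩ <;>
      rw [div_pow, one_pow] <;> field_simp <;> linarith
  calc _ ≤ _ := lintegral_mono_set' hcover
    _ ≤ _ := lintegral_rpow_pnorm_iUnion_shell_le ha (by norm_num) (by positivity) hq
    _ = _ := by
      rw [Real.div_rpow hr.le zero_le_two]
      congr 1
      ring

lemma lintegral_rpow_pnorm_compl_closedBall_le {b : ℝ} (hb : b < -((d : ℝ) + 2)) :
    ∃ B : ℝ, 0 < B ∧ ∀ r : ℝ, 0 < r →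
      ∫⁻ y in {y : ℝ × (Fin d → ℝ) | r ≤ pnorm y}, ENNReal.ofReal (pnorm y ^ b) ≤
        ENNReal.ofReal (B * r ^ (b + ((d : ℝ) + 2))) := by
  set e := b + ((d : ℝ) + 2)
  have hq : (2 : ℝ) ^ e < 1 := Real.rpow_lt_one_of_one_lt_of_neg one_lt_two (by linarith)
  refine ⟨2 ^ (d + 1) * 2 ^ ((d : ℝ) + 2) * (1 - (2 : ℝ) ^ e)⁻¹,
    by have := sub_pos.mpr hq; positivity, fun r hr => ?_⟩
  have hcover : {y : ℝ × (Fin d → ℝ) | r ≤ pnorm y} ⊆ ⋃ k : ℕ,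
      {y | r * 2 ^ k ≤ pnorm y ∧ pnorm y ≤ 2 * (r * 2 ^ k)} := by
    intro y hyr
    obtain ⟨n, hn₁, hn₂⟩ := exists_nat_pow_near ((one_le_div hr).mpr hyr) one_lt_two
    rw [le_div_iff₀ hr] at hn₁
    rw [div_lt_iff₀ hr, pow_succ] at hn₂
    exact Set.mem_iUnion.mpr ⟨n, by linarith, by linarith⟩
  exact (lintegral_mono_set hcover).trans
    (lintegral_rpow_pnorm_iUnion_shell_le (by linarith) two_pos hr hq)

lemma lintegral_rpow_mul_max_rpow_le {a b : ℝ} (ha₀ : -((d : ℝ) + 2) < a) (ha : a ≤ 0)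
    (hab : a + b + ((d : ℝ) + 2) < 0) :
    ∃ M : ℝ, 0 < M ∧ ∀ ρ : ℝ, 0 < ρ →
      ∫⁻ y : ℝ × (Fin d → ℝ), ENNReal.ofReal (pnorm y ^ a * max (pnorm y) ρ ^ b) ≤
        ENNReal.ofReal (M * ρ ^ (a + b + ((d : ℝ) + 2))) := by
  obtain ⟨A, hA, hnear⟩ := lintegral_rpow_pnorm_closedBall_le (d := d) ha₀ ha
  obtain ⟨B, hB, hfar⟩ := lintegral_rpow_pnorm_compl_closedBall_le (d := d) (b := a + b)
    (by linarith)
  refine ⟨A + B, by positivity, fun ρ hρ => ?_⟩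
  set S := {y : ℝ × (Fin d → ℝ) | pnorm y ≤ ρ}
  have hS : MeasurableSet S := measurableSet_le measurable_pnorm measurable_const
  have hin : ∫⁻ y in S, ENNReal.ofReal (pnorm y ^ a * max (pnorm y) ρ ^ b) =
      ENNReal.ofReal (ρ ^ b) * ∫⁻ y in S, ENNReal.ofReal (pnorm y ^ a) := by
    rw [← lintegral_const_mul' _ _ ENNReal.ofReal_ne_top]
    refine setLIntegral_congr_fun hS fun y hy => ?_
    rw [max_eq_right hy, ← ENNReal.ofReal_mul (Real.rpow_nonneg hρ.le _), mul_comm]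
  have hout : ∫⁻ y in Sᶜ, ENNReal.ofReal (pnorm y ^ a * max (pnorm y) ρ ^ b) ≤
      ∫⁻ y in {y : ℝ × (Fin d → ℝ) | ρ ≤ pnorm y}, ENNReal.ofReal (pnorm y ^ (a + b)) := by
    have hSc : Sᶜ = {y | ρ < pnorm y} := by ext y; simp [S]
    rw [hSc]
    refine (setLIntegral_congr_fun (measurableSet_lt measurable_const measurable_pnorm)
      fun y (hy : ρ < pnorm y) => ?_).trans_le
        (lintegral_mono_set fun y (hy : ρ < pnorm y) => hy.le)
    rw [max_eq_left hy.le, Real.rpow_add (hρ.trans hy)]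
  calc _ = (∫⁻ y in S, ENNReal.ofReal (pnorm y ^ a * max (pnorm y) ρ ^ b)) +
        ∫⁻ y in Sᶜ, ENNReal.ofReal (pnorm y ^ a * max (pnorm y) ρ ^ b) :=
        (lintegral_add_compl _ hS).symm
    _ ≤ ENNReal.ofReal (ρ ^ b) * ENNReal.ofReal (A * ρ ^ (a + ((d : ℝ) + 2))) +
        ENNReal.ofReal (B * ρ ^ (a + b + ((d : ℝ) + 2))) := by
        rw [hin]
        gcongr
        exacts [hnear ρ hρ, hout.trans (hfar ρ hρ)]
    _ = ENNReal.ofReal ((A + B) * ρ ^ (a + b + ((d : ℝ) + 2))) := by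
        rw [← ENNReal.ofReal_mul (by positivity), ← ENNReal.ofReal_add (by positivity)
          (by positivity), show a + b + ((d : ℝ) + 2) = b + (a + ((d : ℝ) + 2)) by ring,
          Real.rpow_add hρ b]
        congr 1
        ring

lemma abs_mul_le_rpow_mul_max_rpow {u v C₁ C₂ a b p q ρ : ℝ} (hb : b ≤ 0) (hρ : 0 < ρ)
    (hpq : p ≤ q) (hρq : ρ ≤ q) (hu : |u| ≤ C₁ * p ^ a) (hv : |v| ≤ C₂ * q ^ b) :
    |u * v| ≤ C₁ * C₂ * (p ^ a * max p ρ ^ b) := by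
  have hC₂ : 0 ≤ C₂ :=
    nonneg_of_mul_nonneg_left ((abs_nonneg v).trans hv)
      (Real.rpow_pos_of_pos (hρ.trans_le hρq) b)
  have hqb : q ^ b ≤ max p ρ ^ b :=
    Real.rpow_le_rpow_of_nonpos (lt_max_of_lt_right hρ) (max_le hpq hρq) hb
  rw [abs_mul]
  calc |u| * |v| ≤ (C₁ * p ^ a) * (C₂ * q ^ b) :=
        mul_le_mul hu hv (abs_nonneg _) ((abs_nonneg _).trans hu)
    _ ≤ (C₁ * p ^ a) * (C₂ * max p ρ ^ b) := by
        have := (abs_nonneg u).trans hu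
        gcongr
    _ = C₁ * C₂ * (p ^ a * max p ρ ^ b) := by ring

lemma lintegral_abs_mul_sub_le {K₁ K₂ : ℝ × (Fin d → ℝ) → ℝ} {ζ₁ ζ₂ C₁ C₂ : ℝ}
    (hζ₁ : ζ₁ ≤ 0) (hζ₂ : ζ₂ ≤ 0)
    (hK₁ : ∀ z, 0 < pnorm z → |K₁ z| ≤ C₁ * pnorm z ^ ζ₁)
    (hK₂ : ∀ z, 0 < pnorm z → |K₂ z| ≤ C₂ * pnorm z ^ ζ₂)
    {z : ℝ × (Fin d → ℝ)} (hz : 0 < pnorm z) :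
    ∫⁻ y, ENNReal.ofReal |K₁ y * K₂ (z - y)| ≤ ENNReal.ofReal (C₁ * C₂) *
      ((∫⁻ y : ℝ × (Fin d → ℝ),
          ENNReal.ofReal (pnorm y ^ ζ₁ * max (pnorm y) (pnorm z / 2) ^ ζ₂)) +
        ∫⁻ y : ℝ × (Fin d → ℝ),
          ENNReal.ofReal (pnorm y ^ ζ₂ * max (pnorm y) (pnorm z / 2) ^ ζ₁)) := by
  set ρ := pnorm z / 2 with hρ_def
  have hρ : 0 < ρ := by positivity
  set P : ℝ → ℝ → ℝ × (Fin d → ℝ) → ENNReal :=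
    fun a b y => ENNReal.ofReal (pnorm y ^ a * max (pnorm y) ρ ^ b)
  have hpt : ∀ y, y ≠ 0 → y ≠ z → ENNReal.ofReal |K₁ y * K₂ (z - y)| ≤
      ENNReal.ofReal (C₁ * C₂) * (P ζ₁ ζ₂ y + P ζ₂ ζ₁ (z - y)) := by
    intro y hy0 hyz
    have hpy := pnorm_pos hy0
    have hpzy := pnorm_pos (sub_ne_zero.mpr hyz.symm)
    have htri := pnorm_le_add_pnorm_sub z y
    rcases le_total (pnorm y) (pnorm (z - y)) with h | h
    · calc ENNReal.ofReal |K₁ y * K₂ (z - y)|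
          ≤ ENNReal.ofReal (C₁ * C₂ * (pnorm y ^ ζ₁ * max (pnorm y) ρ ^ ζ₂)) :=
            ENNReal.ofReal_le_ofReal (abs_mul_le_rpow_mul_max_rpow hζ₂ hρ h (by linarith)
              (hK₁ y hpy) (hK₂ _ hpzy))
        _ = ENNReal.ofReal (C₁ * C₂) * P ζ₁ ζ₂ y := ENNReal.ofReal_mul' (by positivity)
        _ ≤ _ := by gcongr; exact le_self_add
    · calc ENNReal.ofReal |K₁ y * K₂ (z - y)| = ENNReal.ofReal |K₂ (z - y) * K₁ y| := by
            rw [mul_comm]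
        _ ≤ ENNReal.ofReal (C₂ * C₁ * (pnorm (z - y) ^ ζ₂ * max (pnorm (z - y)) ρ ^ ζ₁)) :=
            ENNReal.ofReal_le_ofReal (abs_mul_le_rpow_mul_max_rpow hζ₁ hρ h (by linarith)
              (hK₂ _ hpzy) (hK₁ y hpy))
        _ = ENNReal.ofReal (C₁ * C₂) * P ζ₂ ζ₁ (z - y) := by
            rw [mul_comm C₂, ENNReal.ofReal_mul' (by positivity)]
        _ ≤ _ := by gcongr; exact le_add_self
  calc ∫⁻ y, ENNReal.ofReal |K₁ y * K₂ (z - y)|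
      ≤ ∫⁻ y, ENNReal.ofReal (C₁ * C₂) * (P ζ₁ ζ₂ y + P ζ₂ ζ₁ (z - y)) := by
        refine lintegral_mono_ae ?_
        filter_upwards [Measure.ae_ne volume 0, Measure.ae_ne volume z] with y hy0 hyz
        exact hpt y hy0 hyz
    _ = ENNReal.ofReal (C₁ * C₂) * ((∫⁻ y, P ζ₁ ζ₂ y) + ∫⁻ y, P ζ₂ ζ₁ (z - y)) := by
        rw [lintegral_const_mul _ (by fun_prop), lintegral_add_left (by fun_prop)]
    _ = _ := by rw [lintegral_sub_left_eq_self]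

end

lemma integrable_and_abs_integral_le_of_lintegral_le {α : Type*} [MeasurableSpace α]
    {μ : Measure α} {f : α → ℝ} {X : ℝ} (hf : AEStronglyMeasurable f μ) (hX : 0 ≤ X)
    (h : ∫⁻ x, ENNReal.ofReal |f x| ∂μ ≤ ENNReal.ofReal X) :
    Integrable f μ ∧ |∫ x, f x ∂μ| ≤ X := by
  simp only [← Real.norm_eq_abs] at h ⊢
  exact ⟨⟨hf, (hasFiniteIntegral_iff_norm f).mpr (h.trans_lt ENNReal.ofReal_lt_top)⟩,
    (norm_integral_le_lintegral_norm f).trans (ENNReal.toReal_le_of_le_ofReal hX h)⟩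

/-- if `K₁, K₂` are compactly supported kernels of orders `ζ₁, ζ₂` with
`ζ₁ ∧ ζ₂ > -d_𝔰` and `ζ = ζ₁ + ζ₂ + d_𝔰 < 0` (`d_𝔰 = d + 2` the parabolic dimension),
then the convolution `K₁ ∗ K₂` is well-defined away from the origin and is a kernel of
order `ζ`, with `‖K₁ ∗ K₂‖_ζ ≲ ‖K₁‖_{ζ₁}‖K₂‖_{ζ₂}` (constant independent of the kernels). -/
theorem kernel_convolution_order {d : ℕ} (ζ₁ ζ₂ : ℝ)
    (hζ₁ : -((d : ℝ) + 2) < ζ₁) (hζ₂ : -((d : ℝ) + 2) < ζ₂)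
    (hζ : ζ₁ + ζ₂ + ((d : ℝ) + 2) < 0) :
    ∃ C : ℝ, 0 < C ∧ ∀ (K₁ K₂ : ℝ × (Fin d → ℝ) → ℝ) (C₁ C₂ : ℝ),
      Measurable K₁ → Measurable K₂ →
      (∀ z, 1 ≤ pnorm z → K₁ z = 0) → (∀ z, 1 ≤ pnorm z → K₂ z = 0) →
      (∀ z, 0 < pnorm z → |K₁ z| ≤ C₁ * pnorm z ^ ζ₁) →
      (∀ z, 0 < pnorm z → |K₂ z| ≤ C₂ * pnorm z ^ ζ₂) →
      ∀ z : ℝ × (Fin d → ℝ), 0 < pnorm z → pnorm z < 1 →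
        Integrable (fun y => K₁ y * K₂ (z - y)) volume ∧
        |∫ y, K₁ y * K₂ (z - y)| ≤ C * C₁ * C₂ * pnorm z ^ (ζ₁ + ζ₂ + ((d : ℝ) + 2)) := by
  have hζ₁' : ζ₁ ≤ 0 := by linarith
  have hζ₂' : ζ₂ ≤ 0 := by linarith
  obtain ⟨M₁, hM₁, hI₁⟩ := lintegral_rpow_mul_max_rpow_le (d := d) hζ₁ hζ₁' hζ
  obtain ⟨M₂, hM₂, hI₂⟩ :=
    lintegral_rpow_mul_max_rpow_le (d := d) (b := ζ₁) hζ₂ hζ₂' (by linarith)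
  set ζ := ζ₁ + ζ₂ + ((d : ℝ) + 2)
  refine ⟨(M₁ + M₂) / 2 ^ ζ, by positivity, ?_⟩
  intro K₁ K₂ C₁ C₂ hK₁m hK₂m _ _ hK₁ hK₂ z hz _
  have hC₁ : 0 ≤ C₁ :=
    nonneg_of_mul_nonneg_left ((abs_nonneg _).trans (hK₁ z hz)) (Real.rpow_pos_of_pos hz _)
  have hC₂ : 0 ≤ C₂ :=
    nonneg_of_mul_nonneg_left ((abs_nonneg _).trans (hK₂ z hz)) (Real.rpow_pos_of_pos hz _)
  have hρ : 0 < pnorm z / 2 := by positivity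
  refine integrable_and_abs_integral_le_of_lintegral_le (by fun_prop) (by positivity) ?_
  calc _ ≤ _ := lintegral_abs_mul_sub_le hζ₁' hζ₂' hK₁ hK₂ hz
    _ ≤ ENNReal.ofReal (C₁ * C₂) * (ENNReal.ofReal (M₁ * (pnorm z / 2) ^ ζ) +
          ENNReal.ofReal (M₂ * (pnorm z / 2) ^ ζ)) := by
        gcongr
        · exact hI₁ _ hρ
        · simpa only [add_comm ζ₂ ζ₁] using hI₂ _ hρ
    _ = _ := by
        rw [← ENNReal.ofReal_add (by positivity) (by positivity),
          ← ENNReal.ofReal_mul (by positivity), Real.div_rpow (pnorm_nonneg z) zero_le_two]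
        congr 1
        ring
end

section
/- Let X : [-1,1] → ℝ be a continuous function and α' ∈ (0,1). Then sup_{s≠t ∈ [-1,1]} |X(s) - X(t)|/|s-t|^{α'} ≲ sup_{k ≥ 0} sup_{s ∈ 2^{-k}ℤ ∩ [-1,1)} 2^{kα'} |X(s + 2^{-k}) - X(s)|, with an implied constant depending only on α'. -/
/-!
Write `π_k s = ⌊2^k s⌋ / 2^k` for the dyadic point of level `k` below `s` and `ρ = 2^(-α')`.
Passing from `π_k s` to `π_(k+1) s` costs at most one dyadic step of level `k + 1`, so by
continuity and geometric summation `|X s - X (π_k s)| ≤ B ρ^(k+1) / (1 - ρ)`. For `s < t` pick `k`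
with `1 < 2^k (t - s) ≤ 2`: then `π_k s` and `π_k t` are at most two steps of level `k` apart and
`ρ^k < (t - s)^α'`, whence `|X s - X t| ≤ 2 B / (1 - ρ) · (t - s)^α'`.
-/

open Set Filter Topology

lemma Int.dist_le_sub_mul_of_dist_succ_le {E : Type*} [PseudoMetricSpace E] {f : ℤ → E}
    {a b : ℤ} (hab : a ≤ b) {M : ℝ} (h : ∀ n, a ≤ n → n < b → dist (f n) (f (n + 1)) ≤ M) :
    dist (f a) (f b) ≤ (b - a) * M := by
  obtain ⟨m, rfl⟩ := Int.le.dest hab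
  have := dist_le_range_sum_of_dist_le (f := fun i : ℕ => f (a + i)) m (d := fun _ => M)
    fun {i} hi => by simpa [add_assoc] using h (a + i) (by omega) (by omega)
  simpa using this

lemma Int.floor_two_mul_mem_Icc {R : Type*} [Field R] [LinearOrder R] [IsStrictOrderedRing R]
    [FloorRing R] (x : R) : ⌊2 * x⌋ ∈ Icc (2 * ⌊x⌋) (2 * ⌊x⌋ + 1) := by
  constructor
  · exact Int.le_floor.2 (by push_cast; linarith [Int.floor_le x])
  · exact Int.lt_add_one_iff.1 (Int.floor_lt.2 (by push_cast; linarith [Int.lt_floor_add_one x]))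

noncomputable def dyadicFloor (k : ℕ) (s : ℝ) : ℝ := ⌊2 ^ k * s⌋ / 2 ^ k

lemma dyadicFloor_le (k : ℕ) (s : ℝ) : dyadicFloor k s ≤ s := by
  rw [dyadicFloor, div_le_iff₀ (by positivity), mul_comm]
  exact Int.floor_le _

lemma sub_le_dyadicFloor (k : ℕ) (s : ℝ) : s - (1 / 2) ^ k ≤ dyadicFloor k s := by
  calc s - (1 / 2) ^ k = (2 ^ k * s - 1) / 2 ^ k := by rw [one_div_pow]; field_simp
    _ ≤ dyadicFloor k s := by
      rw [dyadicFloor]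
      gcongr
      linarith [Int.lt_floor_add_one (2 ^ k * s)]

lemma tendsto_dyadicFloor (s : ℝ) : Tendsto (dyadicFloor · s) atTop (𝓝 s) := by
  refine tendsto_of_tendsto_of_tendsto_of_le_of_le ?_ tendsto_const_nhds
    (sub_le_dyadicFloor · s) (dyadicFloor_le · s)
  simpa using tendsto_const_nhds.sub
    (tendsto_pow_atTop_nhds_zero_of_lt_one (by norm_num : (0 : ℝ) ≤ 1 / 2) (by norm_num))

lemma floor_two_pow_mul_mem_Icc {s : ℝ} (hs : s ∈ Icc (-1) 1) (k : ℕ) :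
    ⌊2 ^ k * s⌋ ∈ Icc (-2 ^ k) (2 ^ k) := by
  have h2k : (0 : ℝ) < 2 ^ k := by positivity
  constructor
  · exact Int.le_floor.2 (by push_cast; nlinarith [hs.1])
  · exact Int.floor_le_iff.2 (by push_cast; nlinarith [hs.2])

lemma dyadicFloor_mem_Icc {s : ℝ} (hs : s ∈ Icc (-1) 1) (k : ℕ) :
    dyadicFloor k s ∈ Icc (-1) 1 := by
  refine ⟨?_, (dyadicFloor_le k s).trans hs.2⟩
  rw [dyadicFloor, le_div_iff₀ (by positivity)]
  have : (-2 ^ k : ℝ) ≤ ⌊2 ^ k * s⌋ := by exact_mod_cast (floor_two_pow_mul_mem_Icc hs k).1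
  linarith

lemma exists_two_pow_mul_mem_Ioc {d : ℝ} (hd : 0 < d) (hd2 : d ≤ 2) :
    ∃ k : ℕ, 1 < 2 ^ k * d ∧ 2 ^ k * d ≤ 2 := by
  obtain ⟨k, hk₁, hk₂⟩ := exists_nat_pow_near (one_le_div hd |>.2 hd2) one_lt_two
  refine ⟨k, ?_, (le_div_iff₀ hd).1 hk₁⟩
  rw [div_lt_iff₀ hd, pow_succ] at hk₂
  linarith

lemma inv_two_rpow_pow_lt_rpow {α d : ℝ} (hα : 0 < α) (hd : 0 < d) {k : ℕ}
    (hk : 1 < 2 ^ k * d) : ((2 : ℝ) ^ α)⁻¹ ^ k < d ^ α := by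
  rw [inv_pow, ← Real.rpow_natCast, ← Real.rpow_mul zero_le_two, mul_comm,
    Real.rpow_mul zero_le_two, Real.rpow_natCast, inv_lt_iff_one_lt_mul₀ (by positivity),
    ← Real.mul_rpow hd.le (by positivity), mul_comm]
  exact Real.one_lt_rpow hk hα

section DyadicIncrements

variable {E : Type*} [PseudoMetricSpace E]

def DyadicIncrementBound (X : ℝ → E) (B ρ : ℝ) : Prop :=
  ∀ (k : ℕ) (n : ℤ), -2 ^ k ≤ n → n < 2 ^ k →
    dist (X (n / 2 ^ k)) (X ((n + 1) / 2 ^ k)) ≤ B * ρ ^ k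

variable {X : ℝ → E} {B ρ : ℝ}

namespace DyadicIncrementBound

lemma nonneg (hX : DyadicIncrementBound X B ρ) (k : ℕ) : 0 ≤ B * ρ ^ k :=
  dist_nonneg.trans (hX k (-2 ^ k) le_rfl (neg_lt_self (by positivity)))

lemma dist_le (hX : DyadicIncrementBound X B ρ) {k : ℕ} {a b : ℤ} (hab : a ≤ b)
    (ha : -2 ^ k ≤ a) (hb : b ≤ 2 ^ k) :
    dist (X (a / 2 ^ k)) (X (b / 2 ^ k)) ≤ (b - a) * (B * ρ ^ k) :=
  Int.dist_le_sub_mul_of_dist_succ_le (f := fun n : ℤ => X (n / 2 ^ k)) hab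
    fun n h₁ h₂ => by simpa using hX k n (by omega) (by omega)

lemma dist_dyadicFloor_succ_le (hX : DyadicIncrementBound X B ρ) {s : ℝ}
    (hs : s ∈ Icc (-1) 1) (k : ℕ) :
    dist (X (dyadicFloor k s)) (X (dyadicFloor (k + 1) s)) ≤ B * ρ * ρ ^ k := by
  have hsucc : 2 ^ (k + 1) * s = 2 * (2 ^ k * s) := by ring
  obtain ⟨h₁, h₂⟩ := Int.floor_two_mul_mem_Icc (2 ^ k * s)
  rw [← hsucc] at h₁ h₂
  have hk : dyadicFloor k s = ((2 * ⌊2 ^ k * s⌋ : ℤ) : ℝ) / 2 ^ (k + 1) := by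
    rw [dyadicFloor, pow_succ]; push_cast; field_simp
  have ha := (floor_two_pow_mul_mem_Icc hs k).1
  have hb := (floor_two_pow_mul_mem_Icc hs (k + 1)).2
  rw [hk, dyadicFloor]
  calc _ ≤ ((⌊2 ^ (k + 1) * s⌋ - 2 * ⌊2 ^ k * s⌋ : ℤ) : ℝ) * (B * ρ ^ (k + 1)) := by
        exact_mod_cast hX.dist_le h₁ (by rw [pow_succ]; omega) hb
    _ ≤ 1 * (B * ρ ^ (k + 1)) := by
        gcongr
        · exact hX.nonneg _
        · exact_mod_cast (by omega : ⌊2 ^ (k + 1) * s⌋ - 2 * ⌊2 ^ k * s⌋ ≤ 1)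
    _ = B * ρ * ρ ^ k := by ring

lemma dist_dyadicFloor_le (hX : DyadicIncrementBound X B ρ) (hρ : ρ < 1) {s : ℝ}
    (hs : s ∈ Icc (-1) 1) (hXs : ContinuousWithinAt X (Icc (-1) 1) s) (k : ℕ) :
    dist (X (dyadicFloor k s)) (X s) ≤ B * ρ * ρ ^ k / (1 - ρ) :=
  dist_le_of_le_geometric_of_tendsto ρ (B * ρ) hρ (hX.dist_dyadicFloor_succ_le hs)
    (hXs.tendsto.comp (tendsto_nhdsWithin_iff.2
      ⟨tendsto_dyadicFloor s, .of_forall (dyadicFloor_mem_Icc hs)⟩)) k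

lemma dist_le_of_two_pow_mul_sub_le (hX : DyadicIncrementBound X B ρ) (hρ : ρ < 1)
    (hXc : ContinuousOn X (Icc (-1) 1)) {s t : ℝ} (hs : s ∈ Icc (-1) 1) (ht : t ∈ Icc (-1) 1)
    (hst : s ≤ t) {k : ℕ} (hk : 2 ^ k * (t - s) ≤ 2) :
    dist (X s) (X t) ≤ 2 * (B * ρ ^ k) / (1 - ρ) := by
  have hfloor : ⌊2 ^ k * t⌋ - ⌊2 ^ k * s⌋ ≤ 2 := by
    have : ⌊2 ^ k * t⌋ ≤ ⌊2 ^ k * s + (2 : ℤ)⌋ := Int.floor_le_floor (by push_cast; linarith)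
    rw [Int.floor_add_intCast] at this
    omega
  have hmid : dist (X (dyadicFloor k s)) (X (dyadicFloor k t)) ≤ 2 * (B * ρ ^ k) :=
    calc _ ≤ ((⌊2 ^ k * t⌋ : ℝ) - ⌊2 ^ k * s⌋) * (B * ρ ^ k) :=
          hX.dist_le (Int.floor_le_floor (by gcongr))
            (floor_two_pow_mul_mem_Icc hs k).1 (floor_two_pow_mul_mem_Icc ht k).2
      _ ≤ 2 * (B * ρ ^ k) := by
          gcongr
          · exact hX.nonneg k
          · exact_mod_cast hfloor
  have h1ρ : 1 - ρ ≠ 0 := by linarith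
  calc dist (X s) (X t)
      ≤ dist (X s) (X (dyadicFloor k s)) + dist (X (dyadicFloor k s)) (X (dyadicFloor k t))
        + dist (X (dyadicFloor k t)) (X t) := dist_triangle4 _ _ _ _
    _ ≤ B * ρ * ρ ^ k / (1 - ρ) + 2 * (B * ρ ^ k) + B * ρ * ρ ^ k / (1 - ρ) := by
        rw [dist_comm (X s)]
        gcongr
        · exact hX.dist_dyadicFloor_le hρ hs (hXc s hs) k
        · exact hX.dist_dyadicFloor_le hρ ht (hXc t ht) k
    _ = 2 * (B * ρ ^ k) / (1 - ρ) := by field_simp; ring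

end DyadicIncrementBound

end DyadicIncrements

lemma dyadicIncrementBound_of_rpow {X : ℝ → ℝ} {B α : ℝ}
    (h : ∀ (k : ℕ) (n : ℤ), ((n : ℝ) * 2 ^ (-(k : ℝ)) ∈ Ico (-1 : ℝ) 1) →
      2 ^ ((k : ℝ) * α) * |X (n * 2 ^ (-(k : ℝ)) + 2 ^ (-(k : ℝ))) - X (n * 2 ^ (-(k : ℝ)))| ≤ B) :
    DyadicIncrementBound X B ((2 : ℝ) ^ α)⁻¹ := by
  intro k n hn₁ hn₂
  have h2k : (2 : ℝ) ^ (-(k : ℝ)) = 1 / 2 ^ k := by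
    rw [Real.rpow_neg zero_le_two, Real.rpow_natCast, one_div]
  have h2kα : (2 : ℝ) ^ ((k : ℝ) * α) = (2 ^ α) ^ k := by
    rw [mul_comm, Real.rpow_mul zero_le_two, Real.rpow_natCast]
  have hmem : (n : ℝ) / 2 ^ k ∈ Ico (-1) 1 := by
    rw [mem_Ico, le_div_iff₀ (by positivity), div_lt_one (by positivity)]
    have : (-2 ^ k : ℝ) ≤ n := by exact_mod_cast hn₁
    exact ⟨by linarith, by exact_mod_cast hn₂⟩
  have := h k n (by rwa [h2k, mul_one_div])
  rw [h2k, h2kα, mul_one_div] at this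
  rw [Real.dist_eq, abs_sub_comm, add_div, inv_pow, ← div_eq_mul_inv, le_div_iff₀ (by positivity),
    mul_comm]
  exact this

theorem dyadic_holder_bound_general (α' : ℝ) (hα'₀ : 0 < α') :
    ∃ C : ℝ, 0 < C ∧ ∀ (X : ℝ → ℝ), ContinuousOn X (Set.Icc (-1) 1) →
      ∀ B : ℝ,
      (∀ (k : ℕ) (n : ℤ), ((n : ℝ) * 2 ^ (-(k:ℝ)) ∈ Set.Ico (-1:ℝ) 1) →
        2 ^ ((k:ℝ) * α') * |X ((n : ℝ) * 2 ^ (-(k:ℝ)) + 2 ^ (-(k:ℝ)))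
            - X ((n : ℝ) * 2 ^ (-(k:ℝ)))| ≤ B) →
      ∀ s ∈ Set.Icc (-1:ℝ) 1, ∀ t ∈ Set.Icc (-1:ℝ) 1, s ≠ t →
        |X s - X t| ≤ C * B * |s - t| ^ α' := by
  set ρ : ℝ := ((2 : ℝ) ^ α')⁻¹
  have hρ : ρ < 1 := inv_lt_one_of_one_lt₀ (Real.one_lt_rpow one_lt_two hα'₀)
  refine ⟨2 / (1 - ρ), div_pos two_pos (sub_pos.2 hρ), fun X hX B hB => ?_⟩
  have hXB := dyadicIncrementBound_of_rpow hB
  have hB₀ : 0 ≤ B := by simpa using hXB.nonneg 0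
  suffices h : ∀ s ∈ Icc (-1 : ℝ) 1, ∀ t ∈ Icc (-1 : ℝ) 1, s < t →
      dist (X s) (X t) ≤ 2 / (1 - ρ) * B * (t - s) ^ α' by
    intro s hs t ht hst
    rcases hst.lt_or_gt with hst | hts
    · simpa [abs_of_neg (sub_neg.2 hst), Real.dist_eq] using h s hs t ht hst
    · simpa [abs_sub_comm, abs_of_pos (sub_pos.2 hts), Real.dist_eq] using h t ht s hs hts
  intro s hs t ht hst
  obtain ⟨k, hk₁, hk₂⟩ := exists_two_pow_mul_mem_Ioc (sub_pos.2 hst) (by linarith [hs.1, ht.2])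
  calc dist (X s) (X t) ≤ 2 * (B * ρ ^ k) / (1 - ρ) :=
        hXB.dist_le_of_two_pow_mul_sub_le hρ hX hs ht hst.le hk₂
    _ ≤ 2 * (B * (t - s) ^ α') / (1 - ρ) := by
        gcongr
        exact (inv_two_rpow_pow_lt_rpow hα'₀ (sub_pos.2 hst) hk₁).le
    _ = 2 / (1 - ρ) * B * (t - s) ^ α' := by ring

/-- deterministic dyadic increment bound underlying Kolmogorov's
continuity criterion.  For `α' ∈ (0,1)` there is a constant `C` (depending only on `α'`)
such that for every continuous `X : [-1,1] → ℝ`, if all dyadic increments satisfy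
`2^{kα'} |X(s+2^{-k}) - X(s)| ≤ B` (over `k ≥ 0` and `s ∈ 2^{-k}ℤ ∩ [-1,1)`), then
`|X(s) - X(t)| ≤ C B |s-t|^{α'}` for all `s ≠ t ∈ [-1,1]`. -/
theorem dyadic_holder_bound (α' : ℝ) (hα'₀ : 0 < α') (hα'₁ : α' < 1) :
    ∃ C : ℝ, 0 < C ∧ ∀ (X : ℝ → ℝ), ContinuousOn X (Set.Icc (-1) 1) →
      ∀ B : ℝ,
      (∀ (k : ℕ) (n : ℤ), ((n : ℝ) * 2 ^ (-(k:ℝ)) ∈ Set.Ico (-1:ℝ) 1) →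
        2 ^ ((k:ℝ) * α') * |X ((n : ℝ) * 2 ^ (-(k:ℝ)) + 2 ^ (-(k:ℝ)))
            - X ((n : ℝ) * 2 ^ (-(k:ℝ)))| ≤ B) →
      ∀ s ∈ Set.Icc (-1:ℝ) 1, ∀ t ∈ Set.Icc (-1:ℝ) 1, s ≠ t →
        |X s - X t| ≤ C * B * |s - t| ^ α' :=
  dyadic_holder_bound_general α' hα'₀
end

section
/- Let α > 1 not an integer, and let f : ℝ^{d+1} → ℝ be such that all parabolic derivatives D^j f with |j|_𝔰 ≤ α exist, are continuous, and satisfy the Taylor remainder bounds |D^j f(z̄) − Σ_{|k|_𝔰 ≤ α−|j|_𝔰} (1/k!) D^{j+k}f(z)(z̄−z)^k| ≤ C‖z̄−z‖_𝔰^{α−|j|_𝔰} for ‖z̄−z‖_𝔰 ≤ 1, z, z̄ in a compact 𝔎. Define F(z) := Σ_{|k|_𝔰 ≤ α} (1/k!) D^k f(z) X^k and Γ_{xy} := Γ_{y−x}. Then for every β ∈ ℕ with β < α, sup_{x,y ∈ 𝔎, x≠y} ‖F(x) − Γ_{xy}F(y)‖_β / ‖x−y‖_𝔰^{α−β} < ∞,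 where ‖·‖_β is the ℓ¹ norm on the coefficients of monomials of parabolic degree β. -/
open MvPolynomial

/-- Parabolic norm `‖z‖_𝔰 = |z₀|^{1/2} + Σ_{j≥1} |z_j|` on `ℝ^{d+1}` (index 0 = time). -/
noncomputable def pnormP {d : ℕ} (z : Fin (d + 1) → ℝ) : ℝ :=
  Real.sqrt |z 0| + ∑ i ∈ Finset.univ.erase 0, |z i|

/-- Parabolic degree of a multi-index: `|k|_𝔰 = 2k₀ + Σ_{j≥1} k_j = k₀ + Σ_j k_j`. -/
def pdeg {d : ℕ} (k : Fin (d + 1) →₀ ℕ) : ℕ :=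
  k 0 + k.sum fun _ n => n

/-- Multi-index factorial `k! = Π_i (k_i)!`. -/
def mfact {d : ℕ} (k : Fin (d + 1) →₀ ℕ) : ℕ :=
  k.prod fun _ n => n.factorial

/-- The translation `Γ_h X^k = (X - h)^k` on abstract polynomials. -/
noncomputable def Γpoly (d : ℕ) (h : Fin (d + 1) → ℝ) :
    MvPolynomial (Fin (d + 1)) ℝ →ₐ[ℝ] MvPolynomial (Fin (d + 1)) ℝ :=
  aeval fun i => X i - C (h i)

/-- The `ℓ¹` norm on the coefficients of monomials of parabolic degree `β`. -/
noncomputable def coeffNorm {d : ℕ} (β : ℕ) (p : MvPolynomial (Fin (d + 1)) ℝ) : ℝ :=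
  ∑ k ∈ p.support.filter (fun k => pdeg k = β), |coeff k p|

/-- The canonical lift `F(z) = Σ_{|k|_𝔰 ≤ α} (1/k!) D^k f(z) X^k`. -/
noncomputable def canonLift {d : ℕ} (α : ℝ)
    (Df : (Fin (d + 1) →₀ ℕ) → (Fin (d + 1) → ℝ) → ℝ)
    (z : Fin (d + 1) → ℝ) : MvPolynomial (Fin (d + 1)) ℝ :=
  ∑ᶠ k ∈ {k : Fin (d + 1) →₀ ℕ | (pdeg k : ℝ) ≤ α},
    monomial k (Df k z / (mfact k : ℝ))

/-!
By the multinomial expansion of `Γ_{y-x} X^k = (X - (y - x))^k`, the coefficient of `X^j` in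
`F(x) - Γ_{y-x} F(y)` is exactly `1/j!` times the Taylor remainder of `D^j f` around `y`,
evaluated at `x`. Where `‖x - y‖_𝔰 ≤ 1` it is controlled by the assumed Taylor bound; elsewhere
it is a continuous function on the compact set `𝔎 × 𝔎`, hence bounded, while
`‖x - y‖_𝔰^{α-β} ≥ 1`.
-/

variable {d : ℕ}

lemma pdeg_eq_add_degree (k : Fin (d + 1) →₀ ℕ) : pdeg k = k 0 + k.degree := rfl

lemma pdeg_add (j k : Fin (d + 1) →₀ ℕ) : pdeg (j + k) = pdeg j + pdeg k := by
  simp only [pdeg_eq_add_degree, Finsupp.add_apply, map_add]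
  ring

lemma finite_setOf_pdeg_le (c : ℝ) : {k : Fin (d + 1) →₀ ℕ | (pdeg k : ℝ) ≤ c}.Finite :=
  (Finsupp.finite_of_degree_le ⌊c⌋₊).subset fun k hk =>
    (Nat.le_floor hk).trans' (by simp [pdeg_eq_add_degree])

noncomputable def pdegLe (d : ℕ) (c : ℝ) : Finset (Fin (d + 1) →₀ ℕ) :=
  (finite_setOf_pdeg_le c).toFinset

@[simp]
lemma mem_pdegLe {c : ℝ} {k : Fin (d + 1) →₀ ℕ} : k ∈ pdegLe d c ↔ (pdeg k : ℝ) ≤ c :=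
  Set.Finite.mem_toFinset _

lemma coe_pdegLe (c : ℝ) : (pdegLe d c : Set (Fin (d + 1) →₀ ℕ)) = {k | (pdeg k : ℝ) ≤ c} :=
  Set.Finite.coe_toFinset _

lemma map_addLeftEmbedding_pdegLe (c : ℝ) (j : Fin (d + 1) →₀ ℕ) :
    (pdegLe d (c - pdeg j)).map (addLeftEmbedding j) = (pdegLe d c).filter (j ≤ ·) := by
  ext k
  simp only [Finset.mem_map, mem_pdegLe, addLeftEmbedding_apply, Finset.mem_filter,
    le_iff_exists_add]
  constructor
  · rintro ⟨m, hm, rfl⟩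
    refine ⟨?_, m, rfl⟩
    rw [pdeg_add]; push_cast; linarith
  · rintro ⟨hk, m, rfl⟩
    refine ⟨m, ?_, rfl⟩
    rw [pdeg_add] at hk; push_cast at hk; linarith

lemma mfact_eq_prod (k : Fin (d + 1) →₀ ℕ) : mfact k = ∏ i, (k i).factorial :=
  Finsupp.prod_fintype _ _ fun _ => rfl

lemma one_le_mfact (k : Fin (d + 1) →₀ ℕ) : 1 ≤ (mfact k : ℝ) := by
  rw [Nat.one_le_cast, mfact_eq_prod]
  exact Finset.prod_pos fun i _ => (k i).factorial_pos

lemma mfact_add (j m : Fin (d + 1) →₀ ℕ) :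
    (mfact (j + m) : ℝ) = mfact j * mfact m * ∏ i, (((j + m) i).choose (j i) : ℝ) := by
  simp only [mfact_eq_prod, Nat.cast_prod, ← Finset.prod_mul_distrib, Finsupp.add_apply]
  refine Finset.prod_congr rfl fun i _ => ?_
  rw [← Nat.add_choose_mul_factorial_mul_factorial (j i) (m i), Nat.choose_symm_add]
  push_cast
  ring

lemma coeffNorm_eq_sum (β : ℕ) (p : MvPolynomial (Fin (d + 1)) ℝ) :
    coeffNorm β p = ∑ j ∈ (pdegLe d β).filter (pdeg · = β), |coeff j p| := by
  refine Finset.sum_subset (fun j hj => ?_) fun j _ hj => ?_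
  · obtain ⟨-, hj⟩ := Finset.mem_filter.mp hj
    simp [hj]
  · simp_all

lemma MvPolynomial.X_sub_C_pow {σ R : Type*} [CommRing R] (i : σ) (a : R) (n : ℕ) :
    (X i - C a : MvPolynomial σ R) ^ n =
      ∑ m ∈ Finset.range (n + 1),
        monomial (Finsupp.single i m) ((n.choose m : R) * (-a) ^ (n - m)) := by
  rw [sub_eq_add_neg, ← C_neg, add_pow]
  refine Finset.sum_congr rfl fun m _ => ?_
  rw [← C_pow, X_pow_eq_monomial, ← map_natCast (C (σ := σ)), mul_assoc, ← C_mul, mul_comm,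
    C_mul_monomial, mul_one, mul_comm ((-a) ^ _)]

lemma coeff_Γpoly_monomial (h : Fin (d + 1) → ℝ) (k j : Fin (d + 1) →₀ ℕ) (c : ℝ) :
    coeff j (Γpoly d h (monomial k c)) =
      c * ∏ i, ((k i).choose (j i) : ℝ) * (-h i) ^ (k i - j i) := by
  classical
  rw [Γpoly, aeval_monomial, algebraMap_eq, Finsupp.prod_pow]
  simp_rw [X_sub_C_pow]
  rw [Finset.prod_univ_sum, Finset.mul_sum, coeff_sum]
  simp_rw [← monomial_sum_prod, C_mul_monomial, coeff_monomial]
  rw [Finset.sum_eq_single (⇑j), if_pos (Finsupp.univ_sum_single j)]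
  · intro g _ hg
    rw [if_neg]
    rintro rfl
    exact hg (Finsupp.coe_univ_sum_single g).symm
  · intro hj
    obtain ⟨i, hi⟩ := not_forall.mp (mt Fintype.mem_piFinset.mpr hj)
    rw [Finset.mem_range, not_lt, Nat.succ_le_iff] at hi
    rw [Finset.prod_eq_zero (Finset.mem_univ i) (by simp [Nat.choose_eq_zero_of_lt hi]), mul_zero,
      ite_self]

/-- Spelled exactly as in the Taylor hypothesis of the theorem, which therefore applies to it
by unfolding. -/
noncomputable def taylorRemainder (α : ℝ) (Df : (Fin (d + 1) →₀ ℕ) → (Fin (d + 1) → ℝ) → ℝ)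
    (j : Fin (d + 1) →₀ ℕ) (z w : Fin (d + 1) → ℝ) : ℝ :=
  Df j w - ∑ᶠ k ∈ {k : Fin (d + 1) →₀ ℕ | (pdeg k : ℝ) ≤ α - (pdeg j : ℝ)},
    (Df (j + k) z / (mfact k : ℝ)) * (k.prod fun i n => (w i - z i) ^ n)

section CanonLift

variable (α : ℝ) (Df : (Fin (d + 1) →₀ ℕ) → (Fin (d + 1) → ℝ) → ℝ)

lemma canonLift_eq_sum (z : Fin (d + 1) → ℝ) :
    canonLift α Df z = ∑ k ∈ pdegLe d α, monomial k (Df k z / mfact k) := by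
  rw [canonLift, ← coe_pdegLe, finsum_mem_coe_finset]

lemma coeff_canonLift {j : Fin (d + 1) →₀ ℕ} (hj : (pdeg j : ℝ) ≤ α) (z : Fin (d + 1) → ℝ) :
    coeff j (canonLift α Df z) = Df j z / mfact j := by
  classical
  rw [canonLift_eq_sum, coeff_sum]
  simp_rw [coeff_monomial]
  rw [Finset.sum_ite_eq', if_pos (mem_pdegLe.mpr hj)]

lemma coeff_Γpoly_canonLift (h : Fin (d + 1) → ℝ) (j : Fin (d + 1) →₀ ℕ) (z : Fin (d + 1) → ℝ) :
    coeff j (Γpoly d h (canonLift α Df z)) =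
      (∑ m ∈ pdegLe d (α - pdeg j), Df (j + m) z / mfact m * ∏ i, (-h i) ^ m i) / mfact j := by
  classical
  rw [canonLift_eq_sum, map_sum, coeff_sum]
  simp_rw [coeff_Γpoly_monomial]
  rw [← Finset.sum_filter_of_ne (p := (j ≤ ·)), ← map_addLeftEmbedding_pdegLe, Finset.sum_map,
    Finset.sum_div]
  · refine Finset.sum_congr rfl fun m _ => ?_
    have hm : ∀ i, (j + m) i - j i = m i := fun i => by simp
    simp only [addLeftEmbedding_apply, hm, Finset.prod_mul_distrib, mfact_add]
    have : ∏ i, (((j + m) i).choose (j i) : ℝ) ≠ 0 :=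
      Finset.prod_ne_zero_iff.mpr fun i _ => Nat.cast_ne_zero.mpr (Nat.choose_pos (by simp)).ne'
    have := one_le_mfact j
    have := one_le_mfact m
    field_simp
  · intro k _ hk
    by_contra hjk
    obtain ⟨i, hi⟩ := not_forall.mp (mt Finsupp.le_def.mpr hjk)
    refine hk (mul_eq_zero_of_right _ (Finset.prod_eq_zero (Finset.mem_univ i) ?_))
    simp [Nat.choose_eq_zero_of_lt (not_le.mp hi)]

lemma coeff_canonLift_sub_Γpoly {j : Fin (d + 1) →₀ ℕ} (hj : (pdeg j : ℝ) ≤ α)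
    (x y : Fin (d + 1) → ℝ) :
    coeff j (canonLift α Df x - Γpoly d (y - x) (canonLift α Df y)) =
      taylorRemainder α Df j y x / mfact j := by
  rw [coeff_sub, coeff_canonLift α Df hj, coeff_Γpoly_canonLift, taylorRemainder, ← coe_pdegLe,
    finsum_mem_coe_finset, sub_div]
  simp only [Finsupp.prod_pow, Pi.sub_apply, neg_sub]

end CanonLift

lemma pnormP_nonneg (z : Fin (d + 1) → ℝ) : 0 ≤ pnormP z := by
  unfold pnormP
  positivity

lemma exists_abs_le_mul_rpow_of_le_one {X : Type*} {s : Set X} {g ρ : X → ℝ} {γ C M : ℝ}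
    (hγ : 0 ≤ γ) (hρ : ∀ z ∈ s, 0 ≤ ρ z) (hnear : ∀ z ∈ s, ρ z ≤ 1 → |g z| ≤ C * ρ z ^ γ)
    (hbdd : ∀ z ∈ s, |g z| ≤ M) :
    ∃ C' : ℝ, ∀ z ∈ s, |g z| ≤ C' * ρ z ^ γ := by
  refine ⟨max C 0 + max M 0, fun z hz => ?_⟩
  have hpow : 0 ≤ ρ z ^ γ := Real.rpow_nonneg (hρ z hz) γ
  rcases le_or_gt (ρ z) 1 with hz1 | hz1
  · calc |g z| ≤ C * ρ z ^ γ := hnear z hz hz1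
      _ ≤ (max C 0 + max M 0) * ρ z ^ γ := by gcongr; linarith [le_max_left C 0, le_max_right M 0]
  · calc |g z| ≤ max M 0 := (hbdd z hz).trans (le_max_left _ _)
      _ ≤ max M 0 * ρ z ^ γ := le_mul_of_one_le_right (le_max_right _ _) (Real.one_le_rpow hz1.le hγ)
      _ ≤ (max C 0 + max M 0) * ρ z ^ γ := by gcongr; exact le_add_of_nonneg_left (le_max_right _ _)

lemma continuous_taylorRemainder {α : ℝ} {Df : (Fin (d + 1) →₀ ℕ) → (Fin (d + 1) → ℝ) → ℝ}
    (hcont : ∀ k, (pdeg k : ℝ) ≤ α → Continuous (Df k)) {j : Fin (d + 1) →₀ ℕ}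
    (hj : (pdeg j : ℝ) ≤ α) :
    Continuous fun p : (Fin (d + 1) → ℝ) × (Fin (d + 1) → ℝ) =>
      taylorRemainder α Df j p.1 p.2 := by
  simp only [taylorRemainder, ← coe_pdegLe, finsum_mem_coe_finset, Finsupp.prod_pow]
  refine ((hcont j hj).comp continuous_snd).sub (continuous_finsetSum _ fun k hk => ?_)
  have hjk : (pdeg (j + k) : ℝ) ≤ α := by
    rw [pdeg_add, Nat.cast_add]
    linarith [mem_pdegLe.mp hk]
  have := hcont _ hjk
  fun_prop

lemma exists_abs_coeff_canonLift_sub_Γpoly_le {α C : ℝ}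
    {Df : (Fin (d + 1) →₀ ℕ) → (Fin (d + 1) → ℝ) → ℝ} {𝔎 : Set (Fin (d + 1) → ℝ)}
    (hK : IsCompact 𝔎) (hcont : ∀ k, (pdeg k : ℝ) ≤ α → Continuous (Df k))
    {j : Fin (d + 1) →₀ ℕ} (hj : (pdeg j : ℝ) < α)
    (htaylor : ∀ z ∈ 𝔎, ∀ w ∈ 𝔎, pnormP (w - z) ≤ 1 →
      |taylorRemainder α Df j z w| ≤ C * pnormP (w - z) ^ (α - pdeg j)) :
    ∃ C' : ℝ, ∀ x ∈ 𝔎, ∀ y ∈ 𝔎,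
      |coeff j (canonLift α Df x - Γpoly d (y - x) (canonLift α Df y))| ≤
        C' * pnormP (x - y) ^ (α - pdeg j) := by
  obtain ⟨M, hM⟩ := (hK.prod hK).exists_bound_of_continuousOn
    (continuous_taylorRemainder hcont hj.le).continuousOn
  obtain ⟨C', hC'⟩ := exists_abs_le_mul_rpow_of_le_one (s := 𝔎 ×ˢ 𝔎)
    (ρ := fun p => pnormP (p.2 - p.1)) (sub_nonneg.mpr hj.le) (fun p _ => pnormP_nonneg _)
    (fun p hp => htaylor p.1 hp.1 p.2 hp.2) (fun p hp => (Real.norm_eq_abs _).ge.trans (hM p hp))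
  refine ⟨C', fun x hx y hy => ?_⟩
  rw [coeff_canonLift_sub_Γpoly α Df hj.le, abs_div, Nat.abs_cast]
  exact (div_le_self (abs_nonneg _) (one_le_mfact j)).trans (hC' (y, x) ⟨hy, hx⟩)

theorem canonical_lift_modelled_distribution_general {d : ℕ} (α : ℝ)
    (Df : (Fin (d + 1) →₀ ℕ) → (Fin (d + 1) → ℝ) → ℝ)
    (𝔎 : Set (Fin (d + 1) → ℝ)) (hK : IsCompact 𝔎)
    (C : ℝ)
    (hcont : ∀ k, (pdeg k : ℝ) ≤ α → Continuous (Df k))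
    (htaylor : ∀ j : Fin (d + 1) →₀ ℕ, (pdeg j : ℝ) ≤ α →
      ∀ z ∈ 𝔎, ∀ w ∈ 𝔎, pnormP (w - z) ≤ 1 →
        |Df j w - ∑ᶠ k ∈ {k : Fin (d + 1) →₀ ℕ | (pdeg k : ℝ) ≤ α - (pdeg j : ℝ)},
            (Df (j + k) z / (mfact k : ℝ)) * (k.prod fun i n => (w i - z i) ^ n)|
          ≤ C * pnormP (w - z) ^ (α - (pdeg j : ℝ))) :
    ∀ β : ℕ, (β : ℝ) < α → ∃ C' : ℝ,
      ∀ x ∈ 𝔎, ∀ y ∈ 𝔎, x ≠ y →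
        coeffNorm β (canonLift α Df x - Γpoly d (y - x) (canonLift α Df y))
          ≤ C' * pnormP (x - y) ^ (α - (β : ℝ)) := by
  intro β hβ
  have hcoeff : ∀ j ∈ (pdegLe d β).filter (pdeg · = β), ∃ Cj : ℝ, ∀ x ∈ 𝔎, ∀ y ∈ 𝔎,
      |coeff j (canonLift α Df x - Γpoly d (y - x) (canonLift α Df y))| ≤
        Cj * pnormP (x - y) ^ (α - β) := by
    intro j hj
    obtain rfl := (Finset.mem_filter.mp hj).2
    exact exists_abs_coeff_canonLift_sub_Γpoly_le hK hcont hβ (htaylor j hβ.le)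
  choose! Cj hCj using hcoeff
  refine ⟨∑ j ∈ (pdegLe d β).filter (pdeg · = β), Cj j, fun x hx y hy _ => ?_⟩
  rw [coeffNorm_eq_sum, Finset.sum_mul]
  exact Finset.sum_le_sum fun j hj => hCj j hj x hx y hy

/-- if `f` has continuous parabolic derivatives `D^j f` for `|j|_𝔰 ≤ α`
(`α > 1` non-integer) satisfying the Taylor remainder bounds on a compact set `𝔎`, then
the canonical lift `F(z) = Σ_{|k|_𝔰 ≤ α}(1/k!)D^kf(z)X^k` satisfies, for every `β < α`,
`sup_{x≠y∈𝔎} ‖F(x) - Γ_{xy}F(y)‖_β / ‖x-y‖_𝔰^{α-β} < ∞`, where `Γ_{xy} = Γ_{y-x}` and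
`‖·‖_β` is the `ℓ¹` norm on coefficients of monomials of parabolic degree `β`. -/
theorem canonical_lift_modelled_distribution {d : ℕ} (α : ℝ) (hα : 1 < α)
    (hαnotint : ∀ n : ℕ, (n : ℝ) ≠ α)
    (f : (Fin (d + 1) → ℝ) → ℝ)
    (Df : (Fin (d + 1) →₀ ℕ) → (Fin (d + 1) → ℝ) → ℝ)
    (𝔎 : Set (Fin (d + 1) → ℝ)) (hK : IsCompact 𝔎)
    (C : ℝ)
    (hD0 : Df 0 = f)
    (hcont : ∀ k, (pdeg k : ℝ) ≤ α → Continuous (Df k))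
    (htaylor : ∀ j : Fin (d + 1) →₀ ℕ, (pdeg j : ℝ) ≤ α →
      ∀ z ∈ 𝔎, ∀ w ∈ 𝔎, pnormP (w - z) ≤ 1 →
        |Df j w - ∑ᶠ k ∈ {k : Fin (d + 1) →₀ ℕ | (pdeg k : ℝ) ≤ α - (pdeg j : ℝ)},
            (Df (j + k) z / (mfact k : ℝ)) * (k.prod fun i n => (w i - z i) ^ n)|
          ≤ C * pnormP (w - z) ^ (α - (pdeg j : ℝ))) :
    ∀ β : ℕ, (β : ℝ) < α → ∃ C' : ℝ,
      ∀ x ∈ 𝔎, ∀ y ∈ 𝔎, x ≠ y →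
        coeffNorm β (canonLift α Df x - Γpoly d (y - x) (canonLift α Df y))
          ≤ C' * pnormP (x - y) ^ (α - (β : ℝ)) :=
  canonical_lift_modelled_distribution_general α Df 𝔎 hK C hcont htaylor
end
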